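/- Let Ã, B, u be smooth fields on ℝ × ℝ³ with ∂Ã/∂t − u×(∇×Ã) + ∇(u·Ã) = 0 (the one-form Ã·dx is Lie dragged), ∂B/∂t − ∇×(u×B) = 0 (Faraday's equation) and ∇·B = 0. Then the magnetic helicity density h̃ = Ã·B satisfies the continuity equation ∂h̃/∂t + ∇·(h̃ u) = 0; moreover, if in addition ρ is smooth with ρ > 0 and ∂ρ/∂t + ∇·(ρu) = 0, then (∂/∂t + u·∇)( (Ã·B)/ρ ) = 0. -/

import Mathlib

/-!
With `h = Ã·B`, the product rule gives `∂ₜh = ∂ₜÃ·B + Ã·∂ₜB`. After substituting the two evolution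
equations, the term `(u×(∇×Ã))·B` cancels against the `(u×B)·(∇×Ã)` produced by
`∇·(Ã×(u×B)) = (u×B)·(∇×Ã) − Ã·∇×(u×B)`, and the expansion `Ã×(u×B) = h u − (u·Ã) B` together with
`∇·B = 0` turns what is left into `−∇·(h u)`. For `f = h/ρ` one has
`∂ₜ(fρ) + ∇·(fρu) = ρ (∂ₜ + u·∇) f + f (∂ₜρ + ∇·(ρu))`, so two continuity equations for `fρ` and `ρ`
force `(∂ₜ + u·∇) f = 0` wherever `ρ ≠ 0`.
-/

noncomputable section

/-- Vectors in ℝ³. -/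
abbrev Vec3 : Type := Fin 3 → ℝ

/-- Points of space-time: `(t, x)` with `t : ℝ`, `x : Fin 3 → ℝ`. -/
abbrev Pt : Type := ℝ × Vec3

/-- Euclidean dot product on ℝ³. -/
def dot3 (a b : Vec3) : ℝ := ∑ i, a i * b i

/-- Cross product on ℝ³. -/
def cross3 (a b : Vec3) : Vec3 :=
  ![a 1 * b 2 - a 2 * b 1, a 2 * b 0 - a 0 * b 2, a 0 * b 1 - a 1 * b 0]

/-- Spatial partial derivative ∂f/∂xᵢ of a scalar field. -/
def pd (i : Fin 3) (f : Pt → ℝ) (p : Pt) : ℝ :=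
  fderiv ℝ (fun x => f (p.1, x)) p.2 (Pi.single i 1)

/-- Time derivative ∂f/∂t of a scalar field. -/
def dt (f : Pt → ℝ) (p : Pt) : ℝ := deriv (fun s => f (s, p.2)) p.1

/-- Time derivative of a vector field, componentwise. -/
def dtVec (F : Pt → Vec3) (p : Pt) : Vec3 := fun i => dt (fun q => F q i) p

/-- Spatial gradient ∇f of a scalar field. -/
def grad3 (f : Pt → ℝ) (p : Pt) : Vec3 := fun i => pd i f p

/-- Spatial divergence ∇·F of a vector field. -/
def div3 (F : Pt → Vec3) (p : Pt) : ℝ := ∑ i, pd i (fun q => F q i) p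

/-- Spatial curl ∇×F of a vector field. -/
def curl3 (F : Pt → Vec3) (p : Pt) : Vec3 :=
  ![pd 1 (fun q => F q 2) p - pd 2 (fun q => F q 1) p,
    pd 2 (fun q => F q 0) p - pd 0 (fun q => F q 2) p,
    pd 0 (fun q => F q 1) p - pd 1 (fun q => F q 0) p]

/-- Directional derivative (u·∇)f of a scalar field. -/
def dirD (u : Pt → Vec3) (f : Pt → ℝ) (p : Pt) : ℝ := ∑ i, u p i * pd i f p

/-- Directional derivative (u·∇)F of a vector field. -/
def dirDVec (u F : Pt → Vec3) (p : Pt) : Vec3 :=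
  fun j => ∑ i, u p i * pd i (fun q => F q j) p

/-- (∇u)ᵀ·A, the vector with i-th component ∑ⱼ (∂uʲ/∂xⁱ) Aⱼ. -/
def gradTdot (u A : Pt → Vec3) (p : Pt) : Vec3 :=
  fun i => ∑ j, pd i (fun q => u q j) p * A p j

/-- A field is smooth when it is C^∞ jointly in time and space. -/
def SmoothS (f : Pt → ℝ) : Prop := ContDiff ℝ (⊤ : ℕ∞) f

/-- A vector field is smooth when it is C^∞ jointly in time and space. -/
def SmoothV (F : Pt → Vec3) : Prop := ContDiff ℝ (⊤ : ℕ∞) F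

open Matrix

theorem dot3_eq_dotProduct (a b : Vec3) : dot3 a b = a ⬝ᵥ b := rfl

theorem cross3_eq_crossProduct (a b : Vec3) : cross3 a b = a ⨯₃ b := rfl

theorem dot3_cross3_swap (a b c : Vec3) :
    dot3 (cross3 a b) c = -dot3 (cross3 a c) b := by
  change (a ⨯₃ b) ⬝ᵥ c = -((a ⨯₃ c) ⬝ᵥ b)
  rw [dotProduct_comm, triple_product_permutation, dotProduct_comm (a ⨯₃ c),
    triple_product_permutation, ← cross_anticomm, dotProduct_neg]

section Slices

variable {E F G : Type*} [NormedAddCommGroup E] [NormedSpace ℝ E] [NormedAddCommGroup F]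
  [NormedSpace ℝ F] [NormedAddCommGroup G] [NormedSpace ℝ G] {f : E × F → G} {p : E × F}

theorem DifferentiableAt.comp_prodMk_const_left (hf : DifferentiableAt ℝ f p) :
    DifferentiableAt ℝ (fun x => f (p.1, x)) p.2 :=
  hf.comp p.2 ((differentiableAt_const _).prodMk differentiableAt_id)

theorem DifferentiableAt.comp_prodMk_const_right (hf : DifferentiableAt ℝ f p) :
    DifferentiableAt ℝ (fun s => f (s, p.2)) p.1 :=
  hf.comp p.1 (differentiableAt_id.prodMk (differentiableAt_const _))

end Slices

theorem SmoothS.differentiable {f : Pt → ℝ} (hf : SmoothS f) : Differentiable ℝ f :=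
  ContDiff.differentiable hf (by simp)

theorem SmoothV.differentiable {F : Pt → Vec3} (hF : SmoothV F) : Differentiable ℝ F :=
  ContDiff.differentiable hF (by simp)

section Derivations

variable {f g : Pt → ℝ} {p : Pt}

theorem pd_sub (hf : DifferentiableAt ℝ f p) (hg : DifferentiableAt ℝ g p) (i : Fin 3) :
    pd i (fun q => f q - g q) p = pd i f p - pd i g p := by
  simp only [pd, fderiv_fun_sub hf.comp_prodMk_const_left hg.comp_prodMk_const_left,
    _root_.sub_apply]

theorem pd_mul (hf : DifferentiableAt ℝ f p) (hg : DifferentiableAt ℝ g p) (i : Fin 3) :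
    pd i (fun q => f q * g q) p = pd i f p * g p + f p * pd i g p := by
  simp only [pd, fderiv_fun_mul hf.comp_prodMk_const_left hg.comp_prodMk_const_left,
    _root_.add_apply, _root_.smul_apply, smul_eq_mul]
  ring

theorem dt_mul (hf : DifferentiableAt ℝ f p) (hg : DifferentiableAt ℝ g p) :
    dt (fun q => f q * g q) p = dt f p * g p + f p * dt g p :=
  deriv_fun_mul hf.comp_prodMk_const_right hg.comp_prodMk_const_right

theorem dt_sum {ι : Type*} {s : Finset ι} {f : ι → Pt → ℝ}
    (hf : ∀ i ∈ s, DifferentiableAt ℝ (f i) p) :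
    dt (fun q => ∑ i ∈ s, f i q) p = ∑ i ∈ s, dt (f i) p :=
  deriv_fun_sum fun i hi => (hf i hi).comp_prodMk_const_right

end Derivations

section VectorCalculus

variable {A F : Pt → Vec3} {p : Pt}

theorem DifferentiableAt.dot3 (hA : DifferentiableAt ℝ A p) (hF : DifferentiableAt ℝ F p) :
    DifferentiableAt ℝ (fun q => dot3 (A q) (F q)) p := by
  unfold _root_.dot3; fun_prop

theorem DifferentiableAt.cross3 (hA : DifferentiableAt ℝ A p) (hF : DifferentiableAt ℝ F p) :
    DifferentiableAt ℝ (fun q => cross3 (A q) (F q)) p := by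
  rw [differentiableAt_pi]
  intro i
  fin_cases i <;>
    simp only [_root_.cross3, Fin.isValue, Fin.zero_eta, Fin.mk_one, Fin.reduceFinMk, cons_val_zero,
      cons_val_one, cons_val] <;>
    fun_prop

theorem dt_dot3 (hA : DifferentiableAt ℝ A p) (hF : DifferentiableAt ℝ F p) :
    dt (fun q => dot3 (A q) (F q)) p = dot3 (dtVec A p) (F p) + dot3 (A p) (dtVec F p) := by
  have hAi := differentiableAt_pi.1 hA
  have hFi := differentiableAt_pi.1 hF
  simp only [dot3, dtVec, ← Finset.sum_add_distrib]
  rw [dt_sum fun i _ => (hAi i).fun_mul (hFi i)]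
  exact Finset.sum_congr rfl fun i _ => dt_mul (hAi i) (hFi i)

theorem div3_sub (hA : DifferentiableAt ℝ A p) (hF : DifferentiableAt ℝ F p) :
    div3 (fun q => A q - F q) p = div3 A p - div3 F p := by
  simp only [div3, Pi.sub_apply, ← Finset.sum_sub_distrib]
  exact Finset.sum_congr rfl fun i _ =>
    pd_sub (differentiableAt_pi.1 hA i) (differentiableAt_pi.1 hF i) i

theorem div3_smul {g : Pt → ℝ} (hg : DifferentiableAt ℝ g p) (hF : DifferentiableAt ℝ F p) :
    div3 (fun q => g q • F q) p = g p * div3 F p + dirD F g p := by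
  simp only [div3, dirD, Pi.smul_apply, smul_eq_mul, Finset.mul_sum, ← Finset.sum_add_distrib]
  refine Finset.sum_congr rfl fun i _ => ?_
  rw [pd_mul hg (differentiableAt_pi.1 hF i)]
  ring

theorem div3_cross3 (hA : DifferentiableAt ℝ A p) (hF : DifferentiableAt ℝ F p) :
    div3 (fun q => cross3 (A q) (F q)) p = dot3 (F p) (curl3 A p) - dot3 (A p) (curl3 F p) := by
  have hAi := differentiableAt_pi.1 hA
  have hFi := differentiableAt_pi.1 hF
  simp only [div3, dot3, curl3, cross3, Fin.sum_univ_three, cons_val_zero,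
    cons_val_one, cons_val_two, head_cons, tail_cons]
  simp (disch := fun_prop) only [pd_sub, pd_mul]
  ring

end VectorCalculus

def ContinuityEqAt (u : Pt → Vec3) (f : Pt → ℝ) (p : Pt) : Prop :=
  dt f p + div3 (fun q => f q • u q) p = 0

theorem continuityEqAt_dot3_of_lie_of_faraday {A B u : Pt → Vec3} {p : Pt}
    (hA : DifferentiableAt ℝ A p) (hB : DifferentiableAt ℝ B p) (hu : DifferentiableAt ℝ u p)
    (hlie : dtVec A p - cross3 (u p) (curl3 A p) + grad3 (fun q => dot3 (u q) (A q)) p = 0)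
    (hfar : dtVec B p - curl3 (fun q => cross3 (u q) (B q)) p = 0)
    (hgauss : div3 B p = 0) :
    ContinuityEqAt u (fun q => dot3 (A q) (B q)) p := by
  have hdtA : dtVec A p = cross3 (u p) (curl3 A p) - grad3 (fun q => dot3 (u q) (A q)) p := by
    rw [← sub_eq_zero, ← hlie]; abel
  have hdtB : dtVec B p = curl3 (fun q => cross3 (u q) (B q)) p := sub_eq_zero.1 hfar
  have hgrad : dot3 (grad3 (fun q => dot3 (u q) (A q)) p) (B p) =
      dirD B (fun q => dot3 (u q) (A q)) p :=
    Finset.sum_congr rfl fun i _ => mul_comm _ _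
  have hdiv_expand : div3 (fun q => cross3 (A q) (cross3 (u q) (B q))) p =
      div3 (fun q => dot3 (A q) (B q) • u q) p - dirD B (fun q => dot3 (u q) (A q)) p := by
    simp only [cross3_eq_crossProduct, cross_cross_eq_smul_sub_smul', ← dot3_eq_dotProduct]
    rw [div3_sub ((hA.dot3 hB).fun_smul hu) ((hu.dot3 hA).fun_smul hB),
      div3_smul (hu.dot3 hA) hB, hgauss]
    ring
  have hdiv_cross := div3_cross3 hA (hu.cross3 hB)
  rw [ContinuityEqAt, dt_dot3 hA hB, hdtA, hdtB, dot3_eq_dotProduct (_ - _), sub_dotProduct,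
    ← dot3_eq_dotProduct, ← dot3_eq_dotProduct, dot3_cross3_swap, hgrad]
  linear_combination hdiv_cross - hdiv_expand

theorem dt_mul_add_div3_mul_smul {f ρ : Pt → ℝ} {u : Pt → Vec3} {p : Pt}
    (hf : DifferentiableAt ℝ f p) (hρ : DifferentiableAt ℝ ρ p) (hu : DifferentiableAt ℝ u p) :
    dt (fun q => f q * ρ q) p + div3 (fun q => (f q * ρ q) • u q) p =
      ρ p * (dt f p + dirD u f p) + f p * (dt ρ p + div3 (fun q => ρ q • u q) p) := by
  have hdirD : dirD (fun q => ρ q • u q) f p = ρ p * dirD u f p := by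
    simp only [dirD, Pi.smul_apply, smul_eq_mul, Finset.mul_sum, mul_assoc]
  simp only [mul_smul]
  rw [dt_mul hf hρ, div3_smul hf (hρ.fun_smul hu), hdirD]
  ring

theorem dt_add_dirD_div_eq_zero_of_continuityEqAt {h ρ : Pt → ℝ} {u : Pt → Vec3} {p : Pt}
    (hh : DifferentiableAt ℝ h p) (hρ : DifferentiableAt ℝ ρ p) (hu : DifferentiableAt ℝ u p)
    (hρ0 : ∀ q, ρ q ≠ 0) (hhc : ContinuityEqAt u h p) (hρc : ContinuityEqAt u ρ p) :
    dt (fun q => h q / ρ q) p + dirD u (fun q => h q / ρ q) p = 0 := by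
  have hdiv : DifferentiableAt ℝ (fun q => h q / ρ q) p := by
    fun_prop (disch := exact hρ0 p)
  have key := dt_mul_add_div3_mul_smul hdiv hρ hu
  simp only [div_mul_cancel₀ _ (hρ0 _)] at key
  rw [ContinuityEqAt] at hhc hρc
  rw [hhc, hρc, mul_zero, add_zero, eq_comm] at key
  exact (mul_eq_zero.1 key).resolve_left (hρ0 p)

/-- if Ã·dx is Lie dragged and B obeys Faraday's equation with
    ∇·B = 0, then h̃ = Ã·B obeys a continuity equation; with mass continuity
    in addition, (Ã·B)/ρ is advected. -/
theorem magnetic_helicity_continuity_and_advection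
    (Atil B u : Pt → Vec3)
    (hAtil : SmoothV Atil) (hB : SmoothV B) (hu : SmoothV u)
    (hlie : ∀ p : Pt,
      dtVec Atil p - cross3 (u p) (curl3 Atil p)
        + grad3 (fun q => dot3 (u q) (Atil q)) p = 0)
    (hfar : ∀ p : Pt,
      dtVec B p - curl3 (fun q => cross3 (u q) (B q)) p = 0)
    (hgauss : ∀ p : Pt, div3 B p = 0) :
    (∀ p : Pt,
      dt (fun q => dot3 (Atil q) (B q)) p
        + div3 (fun q => dot3 (Atil q) (B q) • u q) p = 0)
    ∧ (∀ ρ : Pt → ℝ, SmoothS ρ → (∀ p : Pt, 0 < ρ p) →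
        (∀ p : Pt, dt ρ p + div3 (fun q => ρ q • u q) p = 0) →
        ∀ p : Pt,
          dt (fun q => dot3 (Atil q) (B q) / ρ q) p
            + dirD u (fun q => dot3 (Atil q) (B q) / ρ q) p = 0) := by
  have helicity (p : Pt) : ContinuityEqAt u (fun q => dot3 (Atil q) (B q)) p :=
    continuityEqAt_dot3_of_lie_of_faraday (hAtil.differentiable p) (hB.differentiable p)
      (hu.differentiable p) (hlie p) (hfar p) (hgauss p)
  refine ⟨helicity, fun ρ hρ hpos hmass p => ?_⟩
  exact dt_add_dirD_div_eq_zero_of_continuityEqAt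
    ((hAtil.differentiable p).dot3 (hB.differentiable p)) (hρ.differentiable p)
    (hu.differentiable p) (fun q => (hpos q).ne') (helicity p) (hmass p)

end
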